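/- arXiv:dg-ga/9710005 — 3 statements merged into one kernel-verified Lean document; each statement's English description precedes it below -/
import Mathlib

section
/- As R → ∞, ∫_{B_R(0)} ‖∇φ₀‖² dx - 16π·log(1 + πhR²) tends to -16π, where φ₀(x) = -2 log(1 + πh‖x‖²) and h > 0 is constant. -/
/-!
Writing `a = πh`, the gradient of `-2 log(1 + a‖y‖²)` is `-4a y / (1 + a‖y‖²)`, so the energy
density `16a²r²/(1 + ar²)²` is radial. Integrating in polar coordinates, the energy of the ball is
`32π ∫₀ᴿ a²r³/(1 + ar²)² dr = 16π (log(1 + aR²) + 1/(1 + aR²) - 1)`, and `1/(1 + aR²) → 0`.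
-/

open Real Filter MeasureTheory Metric Set

section Gradient

variable {E : Type*} [NormedAddCommGroup E] [InnerProductSpace ℝ E] [CompleteSpace E]

theorem hasGradientAt_mul_log_one_add_mul_norm_sq (c : ℝ) {a : ℝ} (ha : 0 ≤ a) (x : E) :
    HasGradientAt (fun y : E => c * Real.log (1 + a * ‖y‖ ^ 2))
      ((2 * c * a / (1 + a * ‖x‖ ^ 2)) • x) x := by
  have hpos : 0 < 1 + a * ‖x‖ ^ 2 := by positivity
  have hnorm : HasFDerivAt (fun y : E => ‖y‖ ^ 2) (2 • innerSL ℝ x) x := by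
    simpa using (hasFDerivAt_id x).norm_sq
  have hlog : HasDerivAt (fun t : ℝ => c * Real.log (1 + a * t))
      (c * (a / (1 + a * ‖x‖ ^ 2))) (‖x‖ ^ 2) := by
    have hin : HasDerivAt (fun t : ℝ => 1 + a * t) a (‖x‖ ^ 2) := by
      simpa using ((hasDerivAt_id _).const_mul a).const_add 1
    exact (hin.log hpos.ne').const_mul c
  rw [hasGradientAt_iff_hasFDerivAt]
  refine (hlog.comp_hasFDerivAt x hnorm).congr_fderiv ?_
  ext y
  simp only [smul_apply, coe_innerSL_apply, nsmul_eq_mul, Nat.cast_ofNat,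
    smul_eq_mul, map_smul, InnerProductSpace.toDual_apply_apply]
  ring

theorem norm_sq_gradient_mul_log_one_add_mul_norm_sq (c : ℝ) {a : ℝ} (ha : 0 ≤ a) (x : E) :
    ‖gradient (fun y : E => c * Real.log (1 + a * ‖y‖ ^ 2)) x‖ ^ 2
      = (2 * c * a) ^ 2 * ‖x‖ ^ 2 / (1 + a * ‖x‖ ^ 2) ^ 2 := by
  rw [(hasGradientAt_mul_log_one_add_mul_norm_sq c ha x).gradient, norm_smul, mul_pow,
    Real.norm_eq_abs, sq_abs, div_pow]
  ring

end Gradient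

theorem integral_ball_fin_two_fun_norm (g : ℝ → ℝ) {R : ℝ} (hR : 0 ≤ R) :
    ∫ x in ball (0 : EuclideanSpace ℝ (Fin 2)) R, g ‖x‖ = 2 * π * ∫ r in 0..R, r * g r := by
  have hball : ball (0 : EuclideanSpace ℝ (Fin 2)) R = (‖·‖) ⁻¹' Iio R := by ext; simp
  have hunit : (volume : Measure (EuclideanSpace ℝ (Fin 2))).real (ball 0 1) = π := by
    simp [measureReal_def, pi_nonneg]
  calc ∫ x in ball (0 : EuclideanSpace ℝ (Fin 2)) R, g ‖x‖
      = ∫ x : EuclideanSpace ℝ (Fin 2), (Iio R).indicator g ‖x‖ := by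
        rw [← integral_indicator measurableSet_ball, hball]
        exact integral_congr_ae (.of_forall fun x => indicator_comp_right (‖·‖))
    _ = 2 * π * ∫ r in Ioi 0, r * (Iio R).indicator g r := by
        rw [integral_fun_norm_addHaar, finrank_euclideanSpace_fin, hunit]
        simp [smul_eq_mul, mul_assoc]
    _ = 2 * π * ∫ r in 0..R, r * g r := by
        rw [intervalIntegral.integral_of_le hR, integral_Ioc_eq_integral_Ioo, ← Ioi_inter_Iio,
          ← setIntegral_indicator measurableSet_Iio]
        simp_rw [indicator_mul_right]

theorem integral_cube_div_one_add_mul_sq_sq {a : ℝ} (ha : 0 ≤ a) (R : ℝ) :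
    ∫ r in 0..R, a ^ 2 * r ^ 3 / (1 + a * r ^ 2) ^ 2
      = (Real.log (1 + a * R ^ 2) + (1 + a * R ^ 2)⁻¹ - 1) / 2 := by
  have hderiv : ∀ r : ℝ, HasDerivAt
      (fun r : ℝ => (Real.log (1 + a * r ^ 2) + (1 + a * r ^ 2)⁻¹) / 2)
      (a ^ 2 * r ^ 3 / (1 + a * r ^ 2) ^ 2) r := by
    intro r
    have hpos : 0 < 1 + a * r ^ 2 := by positivity
    have hin : HasDerivAt (fun r : ℝ => 1 + a * r ^ 2) (a * (2 * r)) r := by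
      simpa using ((hasDerivAt_pow 2 r).const_mul a).const_add 1
    refine (((hin.log hpos.ne').add (hin.inv hpos.ne')).div_const 2).congr_deriv ?_
    field_simp
    ring
  have hcont : Continuous fun r : ℝ => a ^ 2 * r ^ 3 / (1 + a * r ^ 2) ^ 2 := by
    fun_prop (disch := intro r; positivity)
  rw [intervalIntegral.integral_eq_sub_of_hasDerivAt (fun r _ => hderiv r)
    (hcont.intervalIntegrable 0 R)]
  simp only [ne_eq, OfNat.ofNat_ne_zero, not_false_eq_true, zero_pow, mul_zero, add_zero, log_one,
    inv_one, zero_add]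
  ring

theorem integral_ball_norm_sq_gradient_mul_log_one_add_mul_norm_sq (c : ℝ) {a R : ℝ}
    (ha : 0 ≤ a) (hR : 0 ≤ R) :
    ∫ x in ball (0 : EuclideanSpace ℝ (Fin 2)) R,
        ‖gradient (fun y => c * Real.log (1 + a * ‖y‖ ^ 2)) x‖ ^ 2
      = 4 * π * c ^ 2 * (Real.log (1 + a * R ^ 2) + (1 + a * R ^ 2)⁻¹ - 1) := by
  simp_rw [norm_sq_gradient_mul_log_one_add_mul_norm_sq c ha]
  rw [integral_ball_fin_two_fun_norm (fun r => (2 * c * a) ^ 2 * r ^ 2 / (1 + a * r ^ 2) ^ 2) hR]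
  have hintegrand : ∀ r : ℝ, r * ((2 * c * a) ^ 2 * r ^ 2 / (1 + a * r ^ 2) ^ 2)
      = 4 * c ^ 2 * (a ^ 2 * r ^ 3 / (1 + a * r ^ 2) ^ 2) := fun r => by ring
  simp_rw [hintegrand, intervalIntegral.integral_const_mul, integral_cube_div_one_add_mul_sq_sq ha]
  ring

/-- As `R → ∞`, `∫_{B_R(0)} ‖∇φ₀‖² dx - 16π log(1 + πhR²) → -16π`, where
`φ₀(x) = -2 log(1 + πh‖x‖²)` and `h > 0`. -/
theorem dirichlet_energy_bubble_asymptotic (h : ℝ) (hh : 0 < h) :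
    Tendsto (fun R : ℝ =>
      (∫ x in Metric.ball (0 : EuclideanSpace ℝ (Fin 2)) R,
        ‖gradient (fun y : EuclideanSpace ℝ (Fin 2) =>
            -2 * Real.log (1 + π * h * ‖y‖ ^ 2)) x‖ ^ 2)
        - 16 * π * Real.log (1 + π * h * R ^ 2))
      atTop (nhds (-16 * π)) := by
  have ha : 0 < π * h := by positivity
  have hinv : Tendsto (fun R : ℝ => (1 + π * h * R ^ 2)⁻¹) atTop (nhds 0) :=
    (tendsto_atTop_add_const_left _ 1
      ((tendsto_pow_atTop two_ne_zero).const_mul_atTop ha)).inv_tendsto_atTop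
  have hlim := (hinv.const_mul (16 * π)).sub_const (16 * π)
  rw [mul_zero, zero_sub, ← neg_mul] at hlim
  refine hlim.congr' ?_
  filter_upwards [eventually_ge_atTop 0] with R hR
  rw [integral_ball_norm_sq_gradient_mul_log_one_add_mul_norm_sq _ ha.le hR]
  ring
end

section
/- Let u : ℝ² → ℝ be smooth with Δu = -8πh·e^u (analyst's Laplacian), u(0) = 0, u ≤ 0, and ∫_{ℝ²} h e^u = 1, where h > 0 is constant. If additionally u is radially symmetric and decreasing, then u(x) = -2 log(1 + πh‖x‖²). -/
open Real MeasureTheory intervalIntegral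

private lemma exp_sub_exp_le {a b : ℝ} (ha : a ≤ 0) (hb : b ≤ 0) (hba : b ≤ a) :
    Real.exp a - Real.exp b ≤ a - b := by
  have hanti : AntitoneOn (fun x : ℝ => Real.exp x - x) (Set.Iic 0) := by
    apply antitoneOn_of_deriv_nonpos (convex_Iic 0)
    · exact (Real.continuous_exp.sub continuous_id).continuousOn
    · exact ((Real.differentiable_exp.sub differentiable_id).differentiableOn)
    · intro x hx
      rw [interior_Iic] at hx
      have : deriv (fun x : ℝ => Real.exp x - x) x = Real.exp x - 1 := by
        simp [Real.deriv_exp]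
      rw [this]
      have : Real.exp x ≤ 1 := Real.exp_le_one_iff.mpr hx.le
      linarith
  have := hanti (Set.mem_Iic.mpr hb) (Set.mem_Iic.mpr ha) hba
  simp only at this
  linarith

private lemma abs_exp_sub_exp_le {a b : ℝ} (ha : a ≤ 0) (hb : b ≤ 0) :
    |Real.exp a - Real.exp b| ≤ |a - b| := by
  rcases le_total b a with hba | hab
  · rw [abs_of_nonneg (by linarith [Real.exp_le_exp.mpr hba]), abs_of_nonneg (by linarith)]
    exact exp_sub_exp_le ha hb hba
  · rw [abs_sub_comm, abs_sub_comm a b,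
      abs_of_nonneg (by linarith [Real.exp_le_exp.mpr hab]), abs_of_nonneg (by linarith)]
    exact exp_sub_exp_le hb ha hab

private lemma second_deriv_line {E : Type*} [NormedAddCommGroup E] [NormedSpace ℝ E]
    (u : E → ℝ) (hu : ContDiff ℝ (⊤ : ℕ∞) u) (x v : E) :
    fderiv ℝ (fderiv ℝ u) x v v = deriv (deriv (fun t : ℝ => u (x + t • v))) 0 := by
  have hdu : ContDiff ℝ (⊤ : ℕ∞) (fderiv ℝ u) := hu.fderiv_right (by simp)
  have hline : ∀ t : ℝ, HasDerivAt (fun s : ℝ => x + s • v) v t := fun t => by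
    simpa using ((hasDerivAt_id t).smul_const v).const_add x
  have h1 : ∀ t : ℝ, HasDerivAt (fun s : ℝ => u (x + s • v)) (fderiv ℝ u (x + t • v) v) t :=
    fun t => ((hu.differentiable (by simp) _).hasFDerivAt).comp_hasDerivAt t (hline t)
  have h2 : deriv (fun t : ℝ => u (x + t • v)) = fun t => fderiv ℝ u (x + t • v) v :=
    funext fun t => (h1 t).deriv
  rw [h2]
  have h3 : HasDerivAt (fun t : ℝ => fderiv ℝ u (x + t • v)) (fderiv ℝ (fderiv ℝ u) x v) 0 := by
    have := ((hdu.differentiable (by simp) _).hasFDerivAt (x := x + (0:ℝ) • v)).comp_hasDerivAt 0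
      (hline 0)
    simpa [Function.comp_def] using this
  have h4 : HasDerivAt (fun t : ℝ => fderiv ℝ u (x + t • v) v)
      (fderiv ℝ (fderiv ℝ u) x v v) 0 := by
    have := ((ContinuousLinearMap.apply ℝ ℝ v).hasFDerivAt).comp_hasDerivAt 0 h3
    simpa [Function.comp_def] using this
  exact h4.deriv.symm

set_option maxHeartbeats 1000000 in
/-- Radial case of the Chen–Li classification: if `u : ℝ² → ℝ` is smooth with
`Δu = -8πh e^u`, `u(0) = 0`, `u ≤ 0`, `∫ h e^u = 1`, and `u` is radially symmetric
and decreasing, then `u(x) = -2 log(1 + πh‖x‖²)`. -/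
theorem chen_li_radial (h : ℝ) (hh : 0 < h)
    (u : EuclideanSpace ℝ (Fin 2) → ℝ) (hu : ContDiff ℝ (⊤ : ℕ∞) u)
    (hlap : ∀ x : EuclideanSpace ℝ (Fin 2),
      (iteratedFDeriv ℝ 2 u x) ![EuclideanSpace.single 0 (1 : ℝ), EuclideanSpace.single 0 1]
        + (iteratedFDeriv ℝ 2 u x) ![EuclideanSpace.single 1 (1 : ℝ), EuclideanSpace.single 1 1]
        = -8 * π * h * Real.exp (u x))
    (h0 : u 0 = 0) (hle : ∀ x, u x ≤ 0)
    (hmass : ∫ x : EuclideanSpace ℝ (Fin 2), h * Real.exp (u x) = 1)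
    (hradial : ∃ f : ℝ → ℝ, (∀ x, u x = f ‖x‖) ∧ AntitoneOn f (Set.Ici 0)) :
    ∀ x : EuclideanSpace ℝ (Fin 2), u x = -2 * Real.log (1 + π * h * ‖x‖ ^ 2) := by
  obtain ⟨f, hf, -⟩ := hradial
  set e1 : EuclideanSpace ℝ (Fin 2) := EuclideanSpace.single 0 (1:ℝ) with he1
  set e2 : EuclideanSpace ℝ (Fin 2) := EuclideanSpace.single 1 (1:ℝ) with he2
  have hne1 : ‖e1‖ = 1 := by simp [he1, EuclideanSpace.norm_single]
  -- the one-dimensional profile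
  set g : ℝ → ℝ := fun t => u (t • e1) with hgdef
  have hg : ContDiff ℝ (⊤ : ℕ∞) g := hu.comp (contDiff_id.smul contDiff_const)
  have hgf : ∀ t : ℝ, g t = f |t| := by
    intro t
    rw [hgdef]
    simp only
    rw [hf, norm_smul, hne1, Real.norm_eq_abs, mul_one]
  have hug : ∀ x, u x = g ‖x‖ := by
    intro x
    rw [hf x, hgf ‖x‖, abs_of_nonneg (norm_nonneg x)]
  have hgle : ∀ t, g t ≤ 0 := fun t => hle _
  have hg0 : g 0 = 0 := by
    rw [hgdef]; simp only [zero_smul]; exact h0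
  -- derivative of g at 0 vanishes by evenness
  have hgderiv : Differentiable ℝ g := hg.differentiable (by simp)
  have hgi : ContDiff ℝ ((⊤:ℕ∞) : WithTop ℕ∞) g := hg.of_le (by simp)
  have hdg : ContDiff ℝ ((⊤:ℕ∞) : WithTop ℕ∞) (deriv g) := (contDiff_infty_iff_deriv.mp hgi).2
  have hdgdiff : Differentiable ℝ (deriv g) := hdg.differentiable (by simp)
  have hdgcont : Continuous (deriv g) := hdg.continuous
  have hgeven : ∀ t, g (-t) = g t := by
    intro t; rw [hgf, hgf, abs_neg]
  have hdg0 : deriv g 0 = 0 := by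
    have h1 : HasDerivAt g (deriv g 0) 0 := (hgderiv 0).hasDerivAt
    have h1' : HasDerivAt g (deriv g 0) (-(0:ℝ)) := by simpa using h1
    have h2 : HasDerivAt (fun t : ℝ => g (-t)) (-(deriv g 0)) 0 := by
      simpa [Function.comp_def] using (h1'.comp 0 (hasDerivAt_neg (0:ℝ)))
    have h3 : HasDerivAt g (-(deriv g 0)) 0 := by
      have : (fun t : ℝ => g (-t)) = g := funext hgeven
      rwa [this] at h2
    have := h1.unique h3
    linarith
  -- norm of points in the plane
  have hnorm : ∀ r t : ℝ, ‖r • e1 + t • e2‖ = Real.sqrt (r^2 + t^2) := by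
    intro r t
    rw [he1, he2, EuclideanSpace.norm_eq]
    congr 1
    simp [Fin.sum_univ_two, EuclideanSpace.single_apply, Real.norm_eq_abs, sq_abs]
  have hnorme1 : ∀ r : ℝ, 0 ≤ r → ‖r • e1‖ = r := by
    intro r hr
    rw [norm_smul, hne1, Real.norm_eq_abs, abs_of_nonneg hr, mul_one]
  -- the radial ODE for g
  have hODE : ∀ r : ℝ, 0 < r →
      deriv (deriv g) r + deriv g r / r = -8 * π * h * Real.exp (g r) := by
    intro r hr
    have hx := hlap (r • e1)
    rw [iteratedFDeriv_two_apply, iteratedFDeriv_two_apply] at hx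
    simp only [Matrix.cons_val_zero, Matrix.cons_val_one, Matrix.head_cons] at hx
    rw [second_deriv_line u hu _ _, second_deriv_line u hu _ _] at hx
    -- first term: second derivative along e1
    have hterm1 : deriv (deriv (fun t : ℝ => u (r • e1 + t • e1))) 0 = deriv (deriv g) r := by
      have hfun : (fun t : ℝ => u (r • e1 + t • e1)) = fun t => g (r + t) := by
        funext t
        rw [hgdef]
        simp only
        congr 1
        module
      rw [hfun]
      have hd1 : deriv (fun t : ℝ => g (r + t)) = fun t => deriv g (r + t) := by
        funext t
        have : HasDerivAt (fun t : ℝ => g (r + t)) (deriv g (r + t)) t := by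
          simpa [Function.comp_def] using ((hgderiv (r + t)).hasDerivAt.comp t ((hasDerivAt_id t).const_add r))
        exact this.deriv
      rw [hd1]
      have : HasDerivAt (fun t : ℝ => deriv g (r + t)) (deriv (deriv g) r) 0 := by
        simpa [Function.comp_def] using ((hdgdiff (r + 0)).hasDerivAt.comp 0 ((hasDerivAt_id (0:ℝ)).const_add r))
      exact this.deriv
    -- second term: second derivative along e2
    have hterm2 : deriv (deriv (fun t : ℝ => u (r • e1 + t • e2))) 0 = deriv g r / r := by
      set q : ℝ → ℝ := fun t => Real.sqrt (r^2 + t^2) with hqdef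
      have hqpos : ∀ t, 0 < q t := by
        intro t
        apply Real.sqrt_pos.mpr
        positivity
      have hq0 : q 0 = r := by
        rw [hqdef]; simp only; rw [zero_pow (by norm_num), add_zero, Real.sqrt_sq hr.le]
      have hfun : (fun t : ℝ => u (r • e1 + t • e2)) = fun t => g (q t) := by
        funext t
        rw [hug, hnorm]
      rw [hfun]
      have hq' : ∀ t, HasDerivAt q (t / q t) t := by
        intro t
        have h1 : HasDerivAt (fun t : ℝ => r^2 + t^2) (2*t) t := by
          simpa using ((hasDerivAt_pow 2 t).const_add (r^2))
        have h2 := (Real.hasDerivAt_sqrt (x := r^2 + t^2) (by positivity)).comp t h1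
        refine h2.congr_deriv ?_
        rw [hqdef]
        field_simp
      have hd1 : deriv (fun t => g (q t)) = fun t => deriv g (q t) * (t / q t) := by
        funext t
        exact ((hgderiv (q t)).hasDerivAt.comp t (hq' t)).deriv
      rw [hd1]
      have hA : HasDerivAt (fun t => deriv g (q t)) (deriv (deriv g) (q 0) * (0 / q 0)) 0 :=
        (hdgdiff (q 0)).hasDerivAt.comp 0 (hq' 0)
      have hB : HasDerivAt (fun t : ℝ => t / q t)
          ((1 * q 0 - 0 * (0 / q 0)) / (q 0)^2) 0 :=
        (hasDerivAt_id 0).div (hq' 0) (hqpos 0).ne'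
      have := hA.mul hB
      have heval : deriv (deriv g) (q 0) * (0 / q 0) * (0 / q 0)
          + deriv g (q 0) * ((1 * q 0 - 0 * (0 / q 0)) / (q 0)^2) = deriv g r / r := by
        rw [hq0]
        field_simp
        ring
      rw [heval] at this
      exact this.deriv
    rw [hterm1, hterm2] at hx
    rw [hx, hug, hnorme1 r hr.le]
  -- the explicit solution and its derivatives
  set v : ℝ → ℝ := fun r => -2 * Real.log (1 + π*h*r^2) with hvdef
  set V1 : ℝ → ℝ := fun r => -4*π*h*r / (1 + π*h*r^2) with hV1def
  set V2 : ℝ → ℝ := fun r => (-4*π*h*(1 - π*h*r^2)) / (1 + π*h*r^2)^2 with hV2def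
  have hD : ∀ r : ℝ, 0 < 1 + π*h*r^2 := fun r => by positivity
  have hDer : ∀ r : ℝ, HasDerivAt (fun s : ℝ => 1 + π*h*s^2) (π*h*(2*r)) r := by
    intro r
    have := ((hasDerivAt_pow 2 r).const_mul (π*h)).const_add 1
    simpa using this
  have hv' : ∀ r, HasDerivAt v (V1 r) r := by
    intro r
    have h2 : HasDerivAt v (-2 * (π*h*(2*r) / (1 + π*h*r^2))) r :=
      ((hDer r).log (hD r).ne').const_mul (-2 : ℝ)
    convert h2 using 1
    simp only [hV1def]
    field_simp
    try ring
    try exact Or.inl trivial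
  have hV1' : ∀ r, HasDerivAt V1 (V2 r) r := by
    intro r
    have hnum : HasDerivAt (fun s : ℝ => -4*π*h*s) (-4*π*h) r := by
      simpa using (hasDerivAt_id r).const_mul (-4*π*h)
    have h2 := hnum.div (hDer r) (hD r).ne'
    refine h2.congr_deriv ?_
    simp only [hV2def]
    rw [div_eq_div_iff (by positivity) (by positivity)]
    ring
  have hexp_v : ∀ r : ℝ, Real.exp (v r) = 1/(1 + π*h*r^2)^2 := by
    intro r
    have hlog : v r = Real.log (((1 + π*h*r^2)^2)⁻¹) := by
      simp only [hvdef]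
      rw [Real.log_inv, Real.log_pow]
      push_cast
      ring
    rw [hlog, Real.exp_log (by positivity), one_div]
  have hODEv : ∀ r : ℝ, 0 < r → V2 r + V1 r / r = -8*π*h*Real.exp (v r) := by
    intro r hr
    rw [hexp_v r]
    simp only [hV1def, hV2def]
    field_simp
    ring
  have hvle : ∀ r : ℝ, v r ≤ 0 := by
    intro r
    simp only [hvdef]
    have : 0 ≤ Real.log (1 + π*h*r^2) := Real.log_nonneg
      (by nlinarith [mul_nonneg (mul_nonneg Real.pi_pos.le hh.le) (sq_nonneg r)])
    linarith
  have hv0 : v 0 = 0 := by simp [hvdef]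
  have hV10 : V1 0 = 0 := by simp [hV1def]
  have hvcont : Continuous v := by
    simp only [hvdef]
    exact continuous_const.mul
      ((by fun_prop : Continuous fun r : ℝ => 1 + π*h*r^2).log (fun r => (hD r).ne'))
  have hV1cont : Continuous V1 := by
    simp only [hV1def]
    exact Continuous.div (by fun_prop) (by fun_prop) (fun r => (hD r).ne')
  -- the difference W and its derivative W1
  set W : ℝ → ℝ := fun r => g r - v r with hWdef
  set W1 : ℝ → ℝ := fun r => deriv g r - V1 r with hW1def
  have hW' : ∀ r, HasDerivAt W (W1 r) r := fun r =>
    ((hgderiv r).hasDerivAt).sub (hv' r)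
  have hW1' : ∀ r, HasDerivAt W1 (deriv (deriv g) r - V2 r) r := fun r =>
    ((hdgdiff r).hasDerivAt).sub (hV1' r)
  have hW0 : W 0 = 0 := by simp only [hWdef]; rw [hg0, hv0, sub_zero]
  have hW10 : W1 0 = 0 := by simp only [hW1def]; rw [hdg0, hV10, sub_zero]
  have hWcont : Continuous W := (hg.continuous).sub hvcont
  have hW1cont : Continuous W1 := hdgcont.sub hV1cont
  have hWODE : ∀ r : ℝ, 0 < r →
      W1 r + r * (deriv (deriv g) r - V2 r) = -8*π*h*(r*(Real.exp (g r) - Real.exp (v r))) := by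
    intro r hr
    have h1 := hODE r hr
    have h2 := hODEv r hr
    simp only [hW1def]
    have e1' : deriv (deriv g) r = -8*π*h*Real.exp (g r) - deriv g r / r := by linarith
    have e2' : V2 r = -8*π*h*Real.exp (v r) - V1 r / r := by linarith
    rw [e1', e2']
    field_simp
    ring
  -- integrand
  set F : ℝ → ℝ := fun s => s * (Real.exp (g s) - Real.exp (v s)) with hFdef
  have hFcont : Continuous F := by
    apply continuous_id.mul
    exact (Real.continuous_exp.comp hg.continuous).sub (Real.continuous_exp.comp hvcont)
  -- the conserved quantity P
  set P : ℝ → ℝ := fun r => r * W1 r + 8*π*h * ∫ s in (0:ℝ)..r, F s with hPdef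
  have hP' : ∀ r : ℝ, 0 ≤ r → HasDerivAt P 0 r := by
    intro r hr
    have h1 : HasDerivAt (fun r : ℝ => r * W1 r) (1 * W1 r + r * (deriv (deriv g) r - V2 r)) r :=
      (hasDerivAt_id r).mul (hW1' r)
    have h2 : HasDerivAt (fun r : ℝ => 8*π*h * ∫ s in (0:ℝ)..r, F s) (8*π*h * F r) r :=
      ((hFcont.integral_hasStrictDerivAt 0 r).hasDerivAt).const_mul (8*π*h)
    have h3 := h1.add h2
    refine h3.congr_deriv ?_
    rcases eq_or_lt_of_le hr with heq | hpos
    · rw [← heq, hW10, hFdef]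
      simp
    · have := hWODE r hpos
      rw [one_mul, hFdef]
      simp only
      linarith
  have hPzero : ∀ r : ℝ, 0 ≤ r → P r = 0 := by
    intro r hr
    have hc : ContinuousOn P (Set.Icc 0 r) := by
      apply Continuous.continuousOn
      apply ((continuous_id.mul hW1cont).add (continuous_const.mul _))
      exact intervalIntegral.continuous_primitive (fun a b => hFcont.intervalIntegrable a b) 0
    have := constant_of_has_deriv_right_zero hc (fun x hx =>
      (hP' x hx.1).hasDerivWithinAt) r (Set.mem_Icc.mpr ⟨hr, le_refl r⟩)
    rw [this]
    simp only [hPdef]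
    rw [hW10, intervalIntegral.integral_same]
    ring
  -- Gronwall setup
  set A : ℝ → ℝ := fun r => ∫ s in (0:ℝ)..r, |W s| with hAdef
  have hWabs_cont : Continuous (fun s => |W s|) := hWcont.abs
  have hA0 : A 0 = 0 := by simp only [hAdef]; rw [intervalIntegral.integral_same]
  have hAnonneg : ∀ r : ℝ, 0 ≤ r → 0 ≤ A r := by
    intro r hr
    simp only [hAdef]
    exact intervalIntegral.integral_nonneg hr (fun s _ => abs_nonneg _)
  have hAmono : ∀ t r : ℝ, 0 ≤ t → t ≤ r → A t ≤ A r := by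
    intro t r ht htr
    simp only [hAdef]
    have hadd := intervalIntegral.integral_add_adjacent_intervals
      (hWabs_cont.intervalIntegrable (μ := MeasureTheory.volume) 0 t)
      (hWabs_cont.intervalIntegrable (μ := MeasureTheory.volume) t r)
    have h2 : 0 ≤ ∫ s in t..r, |W s| :=
      intervalIntegral.integral_nonneg htr (fun s _ => abs_nonneg _)
    rw [← hadd]
    linarith
  have hA' : ∀ r : ℝ, HasDerivAt A (|W r|) r := fun r =>
    (hWabs_cont.integral_hasStrictDerivAt 0 r).hasDerivAt
  have hAcont : Continuous A := by
    rw [continuous_iff_continuousAt]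
    exact fun r => (hA' r).continuousAt
  -- bound on W1
  have hW1bound : ∀ r : ℝ, 0 ≤ r → |W1 r| ≤ 8*π*h * A r := by
    intro r hr
    rcases eq_or_lt_of_le hr with heq | hrpos
    · rw [← heq, hW10, hA0, abs_zero, mul_zero]
    · have hPr := hPzero r hr
      simp only [hPdef] at hPr
      have hint : |∫ s in (0:ℝ)..r, F s| ≤ r * A r := by
        calc |∫ s in (0:ℝ)..r, F s| ≤ ∫ s in (0:ℝ)..r, |F s| :=
            intervalIntegral.abs_integral_le_integral_abs hr
        _ ≤ ∫ s in (0:ℝ)..r, r * |W s| := by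
            apply intervalIntegral.integral_mono_on hr
              ((hFcont.abs).intervalIntegrable 0 r)
              ((continuous_const.mul hWabs_cont).intervalIntegrable 0 r)
            intro s hs
            simp only [hFdef, hWdef]
            rw [abs_mul, abs_of_nonneg hs.1]
            calc s * |Real.exp (g s) - Real.exp (v s)| ≤ s * |g s - v s| :=
              mul_le_mul_of_nonneg_left (abs_exp_sub_exp_le (hgle s) (hvle s)) hs.1
            _ ≤ r * |g s - v s| := mul_le_mul_of_nonneg_right hs.2 (abs_nonneg _)
        _ = r * A r := by rw [intervalIntegral.integral_const_mul]
      have hrW1 : r * W1 r = -(8*π*h) * ∫ s in (0:ℝ)..r, F s := by linarith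
      have he : |(-(8*π*h))| = 8*π*h := by
        rw [abs_neg, abs_of_nonneg (by positivity)]
      have habs : |r * W1 r| ≤ 8*π*h * (r * A r) := by
        rw [hrW1, abs_mul, he]
        exact mul_le_mul_of_nonneg_left hint (by positivity)
      have heq2 : r * |W1 r| = |r * W1 r| := by rw [abs_mul, abs_of_nonneg hr]
      have h2 : r * |W1 r| ≤ r * (8*π*h * A r) := by rw [heq2]; linarith [habs]
      exact le_of_mul_le_mul_left h2 hrpos
  -- bound on W
  have hWbound : ∀ r : ℝ, 0 ≤ r → |W r| ≤ r * (8*π*h * A r) := by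
    intro r hr
    have h1 : ∫ t in (0:ℝ)..r, W1 t = W r - W 0 :=
      intervalIntegral.integral_eq_sub_of_hasDerivAt (fun t _ => hW' t)
        (hW1cont.intervalIntegrable 0 r)
    rw [hW0, sub_zero] at h1
    calc |W r| = |∫ t in (0:ℝ)..r, W1 t| := by rw [h1]
    _ ≤ ∫ t in (0:ℝ)..r, |W1 t| := intervalIntegral.abs_integral_le_integral_abs hr
    _ ≤ ∫ t in (0:ℝ)..r, 8*π*h * A r :=
        intervalIntegral.integral_mono_on hr ((hW1cont.abs).intervalIntegrable 0 r)
          intervalIntegrable_const (fun t ht => le_trans (hW1bound t ht.1)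
            (mul_le_mul_of_nonneg_left (hAmono t r ht.1 ht.2) (by positivity)))
    _ = r * (8*π*h * A r) := by
        rw [intervalIntegral.integral_const, smul_eq_mul, sub_zero]
  -- Gronwall conclusion : W vanishes on [0, ∞)
  have hWzero : ∀ r : ℝ, 0 ≤ r → W r = 0 := by
    intro R hR
    set C : ℝ := 8*π*h*R with hCdef
    have hCnonneg : 0 ≤ C := by rw [hCdef]; positivity
    set B : ℝ → ℝ := fun r => A r * Real.exp (-C * r) with hBdef
    have hB' : ∀ r, HasDerivAt B (|W r| * Real.exp (-C*r) + A r * (Real.exp (-C*r) * (-C))) r := by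
      intro r
      have hexp : HasDerivAt (fun r : ℝ => Real.exp (-C * r)) (Real.exp (-C*r) * (-C)) r := by
        have : HasDerivAt (fun r : ℝ => -C * r) (-C) r := by
          simpa using (hasDerivAt_id r).const_mul (-C)
        exact this.exp
      exact (hA' r).mul hexp
    have hBanti : AntitoneOn B (Set.Icc 0 R) := by
      apply antitoneOn_of_deriv_nonpos (convex_Icc 0 R)
      · exact (hAcont.mul (Real.continuous_exp.comp (by fun_prop))).continuousOn
      · intro x _
        exact ((hB' x).differentiableAt).differentiableWithinAt
      · intro x hx
        rw [interior_Icc] at hx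
        rw [(hB' x).deriv]
        have h1 : |W x| ≤ C * A x := by
          have h2 := hWbound x hx.1.le
          have h4 : 0 ≤ 8*π*h * A x := mul_nonneg (by positivity) (hAnonneg x hx.1.le)
          have h5 : x * (8*π*h * A x) ≤ R * (8*π*h * A x) :=
            mul_le_mul_of_nonneg_right hx.2.le h4
          have h6 : R * (8*π*h * A x) = C * A x := by rw [hCdef]; ring
          linarith
        nlinarith [Real.exp_pos (-C*x), hAnonneg x hx.1.le]
    have hBR : B R ≤ B 0 := hBanti (Set.mem_Icc.mpr ⟨le_refl 0, hR⟩)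
      (Set.mem_Icc.mpr ⟨hR, le_refl R⟩) hR
    have hB0 : B 0 = 0 := by
      simp only [hBdef]
      rw [hA0, zero_mul]
    have hAR : A R = 0 := by
      have hexp := Real.exp_pos (-C*R)
      have h1 : A R * Real.exp (-C*R) ≤ 0 := by
        rw [← hB0]; exact hBR
      nlinarith [hAnonneg R hR]
    have h2 := hWbound R hR
    rw [hAR, mul_zero, mul_zero] at h2
    exact abs_nonpos_iff.mp h2
  -- conclusion
  intro x
  rw [hug x]
  have hWx := hWzero ‖x‖ (norm_nonneg x)
  simp only [hWdef] at hWx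
  have hgv : g ‖x‖ = v ‖x‖ := by linarith
  rw [hgv, hvdef]
end

section
/- Let G(r,θ) = -4 log r + A + b₁ r cos θ + b₂ r sin θ + c₁ r² cos²θ + 2c₂ r² cos θ sin θ + c₃ r² sin²θ + O(r³) in polar coordinates, and let the metric be ds² = dr² + g(r,θ)² dθ² with g(r,θ) = r - (K/6)r³ + O(r⁴). If ∫_{∂B_r} ∂G/∂n = -8π(1 - Vol(B_r)) for all small r > 0, where Vol(B_r) = πr² + O(r³), then comparing the coefficient of r² gives c₁ + c₃ + (2/3)K = 4π. Formally: the function r ↦ ∫₀^{2π} (-4/r + b₁cosθ + b₂sinθ + 2c₁ r cos²θ + 4c₂ r cosθ sinθ + 2c₃ r sin²θ)·(r - (K/6)r³) dθ + 8π(1 - πr²) is O(r³) near 0 if and only if c₁ + c₃ + (2/3)K = 4π. -/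
open Real Asymptotics

lemma green_integ (b₁ b₂ c₁ c₂ c₃ K r : ℝ) :
    (∫ θ in (0 : ℝ)..(2 * π),
      (-4 / r + b₁ * Real.cos θ + b₂ * Real.sin θ
        + 2 * c₁ * r * Real.cos θ ^ 2 + 4 * c₂ * r * Real.cos θ * Real.sin θ
        + 2 * c₃ * r * Real.sin θ ^ 2) * (r - K / 6 * r ^ 3))
    = (-4 / r * (2 * π) + 2 * c₁ * r * π + 2 * c₃ * r * π) * (r - K / 6 * r ^ 3) := by
  rw [intervalIntegral.integral_mul_const]
  congr 1
  rw [intervalIntegral.integral_add, intervalIntegral.integral_add,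
    intervalIntegral.integral_add, intervalIntegral.integral_add,
    intervalIntegral.integral_add]
  · simp only [mul_assoc, intervalIntegral.integral_const_mul, integral_cos, integral_sin,
      show (∀ θ : ℝ, Real.cos θ * Real.sin θ = Real.sin θ * Real.cos θ) from
        fun θ => mul_comm _ _,
      integral_cos_sq, integral_sin_mul_cos₁, integral_sin_sq, Real.sin_two_pi, Real.cos_two_pi,
      Real.sin_zero, Real.cos_zero, intervalIntegral.integral_const, smul_eq_mul]
    ring
  all_goals apply Continuous.intervalIntegrable; fun_prop

/-- Proposition 3.3 via coefficient comparison: the function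
`r ↦ ∫₀^{2π} (-4/r + b₁cosθ + b₂sinθ + 2c₁ r cos²θ + 4c₂ r cosθ sinθ + 2c₃ r sin²θ)·(r - (K/6)r³) dθ
      + 8π(1 - πr²)`
is `O(r³)` as `r → 0⁺` if and only if `c₁ + c₃ + (2/3)K = 4π`. -/
theorem green_coefficient_identity (b₁ b₂ c₁ c₂ c₃ K : ℝ) :
    (fun r : ℝ =>
        (∫ θ in (0 : ℝ)..(2 * π),
          (-4 / r + b₁ * Real.cos θ + b₂ * Real.sin θ
            + 2 * c₁ * r * Real.cos θ ^ 2 + 4 * c₂ * r * Real.cos θ * Real.sin θ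
            + 2 * c₃ * r * Real.sin θ ^ 2) * (r - K / 6 * r ^ 3))
          + 8 * π * (1 - π * r ^ 2))
      =O[nhdsWithin 0 (Set.Ioi 0)] (fun r : ℝ => r ^ 3)
    ↔ c₁ + c₃ + 2 / 3 * K = 4 * π := by
  set C : ℝ := 2 * π * (c₁ + c₃) + 4 * π * K / 3 - 8 * π ^ 2 with hC
  set D : ℝ := -(π * K / 3) * (c₁ + c₃) with hD
  have heq : ∀ r : ℝ, r ∈ Set.Ioi (0:ℝ) →
      (∫ θ in (0 : ℝ)..(2 * π),
          (-4 / r + b₁ * Real.cos θ + b₂ * Real.sin θ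
            + 2 * c₁ * r * Real.cos θ ^ 2 + 4 * c₂ * r * Real.cos θ * Real.sin θ
            + 2 * c₃ * r * Real.sin θ ^ 2) * (r - K / 6 * r ^ 3))
          + 8 * π * (1 - π * r ^ 2) = C * r ^ 2 + D * r ^ 4 := by
    intro r hr
    rw [green_integ]
    have hr0 : r ≠ 0 := ne_of_gt hr
    field_simp [hC, hD]
    ring
  have hEvEq : (fun r : ℝ =>
        (∫ θ in (0 : ℝ)..(2 * π),
          (-4 / r + b₁ * Real.cos θ + b₂ * Real.sin θ
            + 2 * c₁ * r * Real.cos θ ^ 2 + 4 * c₂ * r * Real.cos θ * Real.sin θ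
            + 2 * c₃ * r * Real.sin θ ^ 2) * (r - K / 6 * r ^ 3))
          + 8 * π * (1 - π * r ^ 2))
      =ᶠ[nhdsWithin 0 (Set.Ioi 0)] fun r => C * r ^ 2 + D * r ^ 4 :=
    Filter.eventually_inf_principal.2 (Filter.Eventually.of_forall heq)
  rw [Asymptotics.isBigO_congr hEvEq (Filter.EventuallyEq.refl _ _)]
  have hD4 : (fun r : ℝ => D * r ^ 4) =O[nhdsWithin 0 (Set.Ioi 0)] fun r => r ^ 3 := by
    have : (fun r : ℝ => r ^ 4) =O[nhdsWithin 0 (Set.Ioi 0)] fun r => r ^ 3 := by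
      apply IsBigO.of_bound 1
      filter_upwards [self_mem_nhdsWithin,
        Filter.inter_mem self_mem_nhdsWithin
          (nhdsWithin_le_nhds (Metric.ball_mem_nhds 0 one_pos))] with r hr hr'
      have h1 : |r| ≤ 1 := le_of_lt (by simpa [Real.dist_eq] using hr'.2)
      have : |r| ^ 4 ≤ |r| ^ 3 := pow_le_pow_of_le_one (abs_nonneg r) h1 (by norm_num)
      simpa [abs_pow] using this
    simpa using this.const_mul_left D
  have hKey : (fun r : ℝ => C * r ^ 2) =O[nhdsWithin 0 (Set.Ioi 0)] (fun r => r ^ 3) ↔ C = 0 := by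
    constructor
    · intro h
      by_contra hC0
      rcases h.bound with ⟨M, hM⟩
      have hM' := hM
      rw [Filter.eventually_iff, mem_nhdsWithin] at hM'
      rcases hM' with ⟨U, hU, hmem, hsub⟩
      rcases Metric.isOpen_iff.1 hU 0 hmem with ⟨ε, hε, hball⟩
      -- pick r small with r > 0, r < ε, and M * r < |C|
      set r : ℝ := min (ε / 2) (min (|C| / (2 * (|M| + 1))) 1) with hrdef
      have hrpos : 0 < r := by
        apply lt_min (by linarith)
        apply lt_min
        · positivity
        · norm_num
      have hrε : r < ε := lt_of_le_of_lt (min_le_left _ _) (by linarith)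
      have hrU : r ∈ U := hball (by simpa [Real.dist_eq, abs_of_pos hrpos] using hrε)
      have := hsub ⟨hrU, hrpos⟩
      -- |C * r^2| ≤ M * |r^3|
      have hb : |C| * r ^ 2 ≤ M * r ^ 3 := by
        have := this
        simpa [abs_mul, abs_pow, abs_of_pos hrpos] using this
      have hr2 : (0:ℝ) < r ^ 2 := by positivity
      have hCle : |C| ≤ M * r := by
        have : |C| * r ^ 2 ≤ M * r * r ^ 2 := by nlinarith
        exact le_of_mul_le_mul_right this hr2
      have hMabs : M * r ≤ |M| * r := by
        have := le_abs_self M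
        nlinarith
      have hrsmall : r ≤ |C| / (2 * (|M| + 1)) := le_trans (min_le_right _ _) (min_le_left _ _)
      have : |C| ≤ |M| * (|C| / (2 * (|M| + 1))) := by
        calc |C| ≤ M * r := hCle
          _ ≤ |M| * r := hMabs
          _ ≤ |M| * (|C| / (2 * (|M| + 1))) := by
              apply mul_le_mul_of_nonneg_left hrsmall (abs_nonneg M)
      have hCpos : 0 < |C| := abs_pos.2 hC0
      have hMp : 0 < |M| + 1 := by positivity
      set q := |C| / (2 * (|M| + 1)) with hq
      have hq0 : 0 < q := by positivity
      have hCq : |C| = q * (2 * (|M| + 1)) := by rw [hq]; field_simp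
      nlinarith [abs_nonneg M]
    · intro h
      have h0 := Asymptotics.isBigO_zero (E' := ℝ) (fun r : ℝ => r ^ 3) (nhdsWithin 0 (Set.Ioi 0))
      simpa [h] using h0
  constructor
  · intro h
    have h2 : (fun r : ℝ => C * r ^ 2) =O[nhdsWithin 0 (Set.Ioi 0)] fun r => r ^ 3 := by
      have := h.sub hD4
      simpa using this
    have hC0 : C = 0 := hKey.1 h2
    have hπ : (0:ℝ) < π := Real.pi_pos
    rw [hC] at hC0
    have : 2 * π * (c₁ + c₃ + 2 / 3 * K - 4 * π) = 0 := by ring_nf; ring_nf at hC0; linarith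
    have := mul_eq_zero.1 this
    rcases this with h' | h'
    · exact absurd h' (by positivity)
    · linarith
  · intro h
    have hC0 : C = 0 := by rw [hC]; nlinarith [Real.pi_pos]
    refine IsBigO.add ?_ hD4
    have h0 := Asymptotics.isBigO_zero (E' := ℝ) (fun r : ℝ => r ^ 3) (nhdsWithin 0 (Set.Ioi 0))
    simpa [hC0] using h0
end
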